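/- Let G be a locally finite graph and let W : ℕ → V(G) be an infinite walk (W(i) adjacent or equal to W(i+1) for all i) such that every vertex appears only finitely many times in W. Then G contains an infinite path, i.e. an injective sequence P : ℕ → V(G) with P(i) adjacent to P(i+1) for all i, using only vertices that appear in W. -/
import Mathlib


/-- Walk-to-path extraction: in a locally finite graph, an infinite walk in which
every vertex appears only finitely often contains an infinite (injective) path
using only vertices appearing in the walk. -/
theorem stmt6 {V : Type*} (G : SimpleGraph V) (hlf : G.LocallyFinite)
    (W : ℕ → V)
    (hwalk : ∀ i : ℕ, W (i + 1) = W i ∨ G.Adj (W i) (W (i + 1)))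
    (hfin : ∀ v : V, {i : ℕ | W i = v}.Finite) :
    ∃ P : ℕ → V, Function.Injective P ∧
      (∀ i : ℕ, G.Adj (P i) (P (i + 1))) ∧
      (∀ i : ℕ, ∃ j : ℕ, P i = W j) := by
  classical
  have hne : ∀ i : ℕ, i ∈ (hfin (W i)).toFinset := by intro i; simp
  set L : ℕ → ℕ := fun i => ((hfin (W i)).toFinset).max' ⟨i, hne i⟩ with hLdef
  have hLe : ∀ i, i ≤ L i := fun i => Finset.le_max' _ i (hne i)
  have hWL : ∀ i, W (L i) = W i := by
    intro i
    have := Finset.max'_mem ((hfin (W i)).toFinset) ⟨i, hne i⟩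
    simpa using this
  have hgt : ∀ i j, L i < j → W j ≠ W i := by
    intro i j h hj
    have hm : j ∈ (hfin (W i)).toFinset := by simp [hj]
    exact absurd (Finset.le_max' _ j hm) (Nat.not_le.mpr h)
  let n : ℕ → ℕ := fun k => Nat.rec 0 (fun _ m => L m + 1) k
  have hn : ∀ k, n (k + 1) = L (n k) + 1 := fun k => rfl
  have hmono : StrictMono n := by
    apply strictMono_nat_of_lt_succ
    intro k
    rw [hn]
    exact Nat.lt_succ_of_le (hLe _)
  have hkey : ∀ k l, k < l → W (n l) ≠ W (n k) := by
    intro k l hkl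
    apply hgt
    have h1 : n (k + 1) ≤ n l := hmono.monotone (Nat.succ_le_of_lt hkl)
    have h2 : L (n k) < n (k + 1) := by rw [hn]; omega
    omega
  refine ⟨fun k => W (n k), ?_, ?_, fun k => ⟨n k, rfl⟩⟩
  · intro a b hab
    by_contra hne'
    rcases lt_or_gt_of_ne hne' with h | h
    · exact hkey a b h hab.symm
    · exact hkey b a h hab
  · intro k
    rcases hwalk (L (n k)) with h | h
    · exact absurd (h.trans (hWL (n k))) (hkey k (k + 1) (Nat.lt_succ_self k))
    · rw [hWL (n k)] at h
      exact h
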